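/- arXiv:1211.7160 — 6 statements merged into one kernel-verified Lean document; each statement's English description precedes it below -/
import Mathlib

section
/- Let K be a field of characteristic zero, r ≥ 0 an integer, and u₀, u₁, v₀, v₁ ∈ K. Then B_r((u₀ + u₁·t)^r, (v₀ + v₁·t)^r) = r! · (u₀v₁ − u₁v₀)^r, where B_r is the canonical bilinear form on polynomials of degree at most r. -/
open Polynomial

lemma coeff_linear_pow {K : Type*} [CommRing K] (a b : K) (r i : ℕ) (h : i ≤ r) :
    ((C a + C b * X) ^ r).coeff i = (r.choose i : K) * a ^ (r - i) * b ^ i := by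
  have key : ∀ k, (C b * X) ^ k * C a ^ (r - k) * (r.choose k : K[X])
      = C (b ^ k * a ^ (r - k) * (r.choose k : K)) * X ^ k := by
    intro k
    rw [mul_pow, ← C_pow, ← C_pow, map_mul, map_mul, ← C_eq_natCast]
    ring
  rw [add_comm (C a), add_pow, ← lcoeff_apply, map_sum]
  rw [Finset.sum_eq_single i]
  · rw [lcoeff_apply, key, coeff_C_mul, coeff_X_pow, if_pos rfl]
    ring
  · intro k hk hne
    rw [lcoeff_apply, key, coeff_C_mul, coeff_X_pow, if_neg (by omega), mul_zero]
  · intro h'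
    simp at h'; omega

/-- The canonical bilinear form `B_r` on polynomials of degree at most `r`:
`B_r(u,v) = Σ_{i=0}^{r} (−1)^i · i! · (r−i)! · u_i · v_{r−i}`. -/
noncomputable def Bform (K : Type*) [Field K] (r : ℕ) (u v : K[X]) : K :=
  ∑ i ∈ Finset.range (r + 1),
    (-1 : K) ^ i * (Nat.factorial i : K) * (Nat.factorial (r - i) : K) *
      u.coeff i * v.coeff (r - i)

/-- **Lemma.**  On `r`-th powers of linear forms, the canonical form evaluates as
`B_r((u₀ + u₁t)^r, (v₀ + v₁t)^r) = r!·(u₀v₁ − u₁v₀)^r`. -/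
theorem Bform_on_powers_of_linear_forms (K : Type*) [Field K] [CharZero K] (r : ℕ)
    (u₀ u₁ v₀ v₁ : K) :
    Bform K r ((C u₀ + C u₁ * X) ^ r) ((C v₀ + C v₁ * X) ^ r)
      = (Nat.factorial r : K) * (u₀ * v₁ - u₁ * v₀) ^ r := by
  have hrhs : (u₀ * v₁ - u₁ * v₀) ^ r
      = ∑ i ∈ Finset.range (r + 1),
        (-1 : K) ^ i * (r.choose i : K) * (u₁ * v₀) ^ i * (u₀ * v₁) ^ (r - i) := by
    rw [sub_eq_add_neg, add_comm, add_pow]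
    refine Finset.sum_congr rfl fun i hi => ?_
    rw [neg_pow]
    ring
  rw [Bform, hrhs, Finset.mul_sum]
  refine Finset.sum_congr rfl fun i hi => ?_
  simp only [Finset.mem_range] at hi
  have hir : i ≤ r := by omega
  rw [coeff_linear_pow _ _ _ _ hir, coeff_linear_pow _ _ _ _ (Nat.sub_le r i)]
  rw [Nat.sub_sub_self hir, Nat.choose_symm hir]
  have hfac : (i.factorial : K) * ((r - i).factorial : K) * (r.choose i : K)
      = (r.factorial : K) := by
    rw [← Nat.cast_mul, ← Nat.cast_mul, ← Nat.choose_mul_factorial_mul_factorial hir]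
    push_cast; ring
  rw [mul_pow, mul_pow]
  calc (-1:K) ^ i * i.factorial * (r-i).factorial * ((r.choose i : K) * u₀ ^ (r-i) * u₁ ^ i)
        * ((r.choose i : K) * v₀ ^ i * v₁ ^ (r-i))
      = ((i.factorial : K) * (r-i).factorial * (r.choose i)) *
        ((r.choose i : K) * ((-1:K)^i * (u₁^i * v₀^i) * (u₀^(r-i) * v₁^(r-i)))) := by ring
    _ = _ := by rw [hfac]; ring
end

section
/- Fix m ≥ 1 and let ⟨p,q⟩ = Σ_{i=0}^{2m−1} (−1)^i p_i q_{2m−1−i} be the symplectic form on ℂ^{2m}. Then for every t ∈ ℂ and every 1 ≤ i ≤ 2m−1, the osculating subspaces satisfy ⟨u,v⟩ = 0 for all u ∈ F_i(t) and v ∈ F_{2m−i}(t); that is, each flag F_•(t) is isotropic. In particular F_m(t) is a Lagrangian subspace of ℂ^{2m} for every t ∈ ℂ. -/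
/-- The nilpotent matrix `η` with `η e_i = e_{i+1}` on standard basis vectors
(0-based indices), i.e. `η_{i+1,i} = 1` and all other entries `0`. -/
noncomputable def eta (m : ℕ) : Matrix (Fin (2 * m)) (Fin (2 * m)) ℂ :=
  Matrix.of fun i j => if (i : ℕ) = (j : ℕ) + 1 then 1 else 0

/-- The osculating subspace `F_j(t) = exp(tη)·span{e_0,…,e_{j−1}} ⊆ ℂ^{2m}` of the rational
normal curve. -/
noncomputable def osc (m : ℕ) (j : ℕ) (t : ℂ) : Submodule ℂ (Fin (2 * m) → ℂ) :=
  Submodule.map (Matrix.toLin' (NormedSpace.exp (t • eta m)))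
    (Submodule.span ℂ
      ((fun i : Fin (2 * m) => (Pi.single i 1 : Fin (2 * m) → ℂ)) '' {i | (i : ℕ) < j}))

/-- The symplectic form `⟨p,q⟩ = Σ_{i=0}^{2m−1} (−1)^i p_i q_{2m−1−i}` on `ℂ^{2m}`. -/
noncomputable def symp (m : ℕ) (p q : Fin (2 * m) → ℂ) : ℂ :=
  ∑ i : Fin (2 * m), (-1 : ℂ) ^ (i : ℕ) * p i * q i.rev

open Matrix NormedSpace

/-- The Gram matrix of the symplectic form. -/
noncomputable def Jmat (m : ℕ) : Matrix (Fin (2 * m)) (Fin (2 * m)) ℂ :=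
  Matrix.of fun i j => if j = i.rev then (-1 : ℂ) ^ (i : ℕ) else 0

lemma symp_eq_dot (m : ℕ) (p q : Fin (2 * m) → ℂ) :
    symp m p q = p ⬝ᵥ (Jmat m *ᵥ q) := by
  unfold symp Jmat
  rw [dotProduct]
  refine Finset.sum_congr rfl fun i _ => ?_
  simp only [Matrix.mulVec, dotProduct, Matrix.of_apply, ite_mul, zero_mul,
    Finset.sum_ite_eq', Finset.mem_univ, if_true]
  ring

lemma J_mul_J (m : ℕ) : Jmat m * Jmat m = -1 := by
  ext i j
  rw [Matrix.mul_apply, Finset.sum_eq_single i.rev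
    (fun k _ hk => by simp only [Jmat, Matrix.of_apply]; rw [if_neg hk, zero_mul])
    (fun h => absurd (Finset.mem_univ _) h)]
  simp only [Jmat, Matrix.of_apply, if_true]
  rw [Fin.rev_rev]
  by_cases h : j = i
  · subst h
    rw [if_pos rfl, ← pow_add]
    have h1 : (j : ℕ) + ((j.rev : Fin (2 * m)) : ℕ) = 2 * m - 1 := by
      rw [Fin.val_rev]; have := j.isLt; omega
    rw [h1]
    have h2 : Odd (2 * m - 1) := ⟨m - 1, by have := j.isLt; omega⟩
    rw [h2.neg_one_pow, Matrix.neg_apply, Matrix.one_apply_eq]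
  · rw [if_neg h, mul_zero, Matrix.neg_apply, Matrix.one_apply_ne' h, neg_zero]

lemma etaT_J (m : ℕ) : (eta m)ᵀ * Jmat m = -(Jmat m * eta m) := by
  ext i j
  have him := i.isLt
  have hjm := j.isLt
  rw [Matrix.neg_apply, Matrix.mul_apply, Matrix.mul_apply]
  have hR : (∑ k, Jmat m i k * eta m k j)
      = if ((i.rev : Fin (2 * m)) : ℕ) = (j : ℕ) + 1 then (-1 : ℂ) ^ (i : ℕ) else 0 := by
    rw [Finset.sum_eq_single i.rev
      (fun k _ hk => by simp only [Jmat, eta, Matrix.of_apply]; rw [if_neg hk, zero_mul])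
      (fun h => absurd (Finset.mem_univ _) h)]
    simp only [Jmat, eta, Matrix.of_apply, if_true]
    rw [mul_ite, mul_one, mul_zero]
  rw [hR]
  by_cases hi : (i : ℕ) + 1 < 2 * m
  · rw [Finset.sum_eq_single (⟨(i : ℕ) + 1, hi⟩ : Fin (2 * m))
      (fun k _ hk => by
        simp only [Matrix.transpose_apply, eta, Jmat, Matrix.of_apply]
        rw [if_neg (fun hv => hk (Fin.ext hv)), zero_mul])
      (fun h => absurd (Finset.mem_univ _) h)]
    simp only [Matrix.transpose_apply, eta, Jmat, Matrix.of_apply, Fin.val_mk, if_true]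
    rw [one_mul]
    by_cases hj : (j : ℕ) = 2 * m - ((i : ℕ) + 2)
    · have hval : ((⟨(i : ℕ) + 1, hi⟩ : Fin (2 * m)) : ℕ) = (i : ℕ) + 1 := rfl
      have c1 : j = (⟨(i : ℕ) + 1, hi⟩ : Fin (2 * m)).rev := by
        apply Fin.ext
        rw [Fin.val_rev, hval]
        omega
      have c2 : ((i.rev : Fin (2 * m)) : ℕ) = (j : ℕ) + 1 := by rw [Fin.val_rev]; omega
      rw [if_pos c1, if_pos c2, pow_succ]
      ring
    · have hval : ((⟨(i : ℕ) + 1, hi⟩ : Fin (2 * m)) : ℕ) = (i : ℕ) + 1 := rfl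
      have c1 : ¬(j = (⟨(i : ℕ) + 1, hi⟩ : Fin (2 * m)).rev) := by
        intro he
        apply hj
        have h3 := congrArg Fin.val he
        rw [Fin.val_rev, hval] at h3
        omega
      have c2 : ¬(((i.rev : Fin (2 * m)) : ℕ) = (j : ℕ) + 1) := by rw [Fin.val_rev]; omega
      rw [if_neg c1, if_neg c2, neg_zero]
  · have c2 : ¬(((i.rev : Fin (2 * m)) : ℕ) = (j : ℕ) + 1) := by rw [Fin.val_rev]; omega
    rw [if_neg c2, neg_zero]
    refine Finset.sum_eq_zero fun k _ => ?_
    have hk := k.isLt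
    simp only [Matrix.transpose_apply, eta, Matrix.of_apply]
    rw [if_neg (by omega), zero_mul]

lemma isUnit_J (m : ℕ) : IsUnit (Jmat m) :=
  ⟨⟨Jmat m, -(Jmat m), by rw [mul_neg, J_mul_J, neg_neg],
    by rw [neg_mul, J_mul_J, neg_neg]⟩, rfl⟩

lemma Jmat_inv (m : ℕ) : (Jmat m)⁻¹ = -(Jmat m) :=
  Matrix.inv_eq_right_inv (by rw [mul_neg, J_mul_J, neg_neg])

lemma MTJM (m : ℕ) (t : ℂ) :
    (exp (t • eta m))ᵀ * (Jmat m * exp (t • eta m)) = Jmat m := by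
  have hJ := isUnit_J m
  have hdetJ : IsUnit (Jmat m).det := (Matrix.isUnit_iff_isUnit_det _).mp hJ
  have hMdet : IsUnit (exp (t • eta m)).det :=
    (Matrix.isUnit_iff_isUnit_det _).mp (Matrix.isUnit_exp _)
  have h2 : (eta m)ᵀ = Jmat m * eta m * Jmat m := by
    have h1 : Jmat m * -(Jmat m) = 1 := by rw [mul_neg, J_mul_J, neg_neg]
    calc (eta m)ᵀ = (eta m)ᵀ * (Jmat m * -(Jmat m)) := by rw [h1, mul_one]
      _ = ((eta m)ᵀ * Jmat m) * -(Jmat m) := by rw [mul_assoc]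
      _ = -(Jmat m * eta m) * -(Jmat m) := by rw [etaT_J m]
      _ = Jmat m * eta m * Jmat m := by rw [neg_mul_neg]
  have hconj : (t • eta m)ᵀ = Jmat m * (-(t • eta m)) * (Jmat m)⁻¹ := by
    rw [Jmat_inv, Matrix.transpose_smul, h2]
    simp only [mul_neg, neg_mul, neg_neg, Matrix.mul_smul, Matrix.smul_mul]
  have hT : (exp (t • eta m))ᵀ = Jmat m * (exp (t • eta m))⁻¹ * (Jmat m)⁻¹ := by
    rw [← Matrix.exp_transpose, hconj, Matrix.exp_conj _ _ hJ, Matrix.exp_neg]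
  rw [hT]
  calc (Jmat m * (exp (t • eta m))⁻¹ * (Jmat m)⁻¹) * (Jmat m * exp (t • eta m))
      = Jmat m * ((exp (t • eta m))⁻¹ * (((Jmat m)⁻¹ * Jmat m) * exp (t • eta m))) := by
        simp only [mul_assoc]
    _ = Jmat m * ((exp (t • eta m))⁻¹ * exp (t • eta m)) := by
        rw [Matrix.nonsing_inv_mul _ hdetJ, one_mul]
    _ = Jmat m := by rw [Matrix.nonsing_inv_mul _ hMdet, mul_one]

lemma symp_exp (m : ℕ) (t : ℂ) (u v : Fin (2 * m) → ℂ) :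
    symp m (exp (t • eta m) *ᵥ u) (exp (t • eta m) *ᵥ v) = symp m u v := by
  rw [symp_eq_dot, symp_eq_dot]
  conv_rhs => rw [← MTJM m t, ← Matrix.mulVec_mulVec, dotProduct_mulVec,
    ← Matrix.mulVec_transpose, Matrix.transpose_transpose]
  rw [Matrix.mulVec_mulVec]

lemma symp_single (m : ℕ) (k l : Fin (2 * m)) (h : (k : ℕ) + (l : ℕ) < 2 * m - 1) :
    symp m (Pi.single k 1) (Pi.single l 1) = 0 := by
  unfold symp
  refine Finset.sum_eq_zero fun i _ => ?_
  rcases eq_or_ne i k with rfl | hik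
  · have hrev : i.rev ≠ l := by
      intro he
      have h1 : (l : ℕ) = 2 * m - ((i : ℕ) + 1) := by rw [← he, Fin.val_rev]
      have h2 := i.isLt
      omega
    rw [Pi.single_eq_of_ne hrev, mul_zero]
  · rw [Pi.single_eq_of_ne hik, mul_zero, zero_mul]

lemma symp_zero_left (m : ℕ) (v : Fin (2 * m) → ℂ) : symp m 0 v = 0 := by simp [symp]

lemma symp_zero_right (m : ℕ) (u : Fin (2 * m) → ℂ) : symp m u 0 = 0 := by simp [symp]

lemma symp_add_left (m : ℕ) (u u' v : Fin (2 * m) → ℂ) :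
    symp m (u + u') v = symp m u v + symp m u' v := by
  unfold symp
  rw [← Finset.sum_add_distrib]
  exact Finset.sum_congr rfl fun i _ => by simp [Pi.add_apply]; ring

lemma symp_add_right (m : ℕ) (u v v' : Fin (2 * m) → ℂ) :
    symp m u (v + v') = symp m u v + symp m u v' := by
  unfold symp
  rw [← Finset.sum_add_distrib]
  exact Finset.sum_congr rfl fun i _ => by simp [Pi.add_apply]; ring

lemma symp_smul_left (m : ℕ) (c : ℂ) (u v : Fin (2 * m) → ℂ) :
    symp m (c • u) v = c * symp m u v := by
  unfold symp
  rw [Finset.mul_sum]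
  exact Finset.sum_congr rfl fun i _ => by simp [Pi.smul_apply]; ring

lemma symp_smul_right (m : ℕ) (c : ℂ) (u v : Fin (2 * m) → ℂ) :
    symp m u (c • v) = c * symp m u v := by
  unfold symp
  rw [Finset.mul_sum]
  exact Finset.sum_congr rfl fun i _ => by simp [Pi.smul_apply]; ring

lemma osc_pair (m a b : ℕ) (hab : a + b ≤ 2 * m) (t : ℂ) :
    ∀ u ∈ osc m a t, ∀ v ∈ osc m b t, symp m u v = 0 := by
  intro u hu v hv
  obtain ⟨x, hx, rfl⟩ := Submodule.mem_map.mp hu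
  obtain ⟨y, hy, rfl⟩ := Submodule.mem_map.mp hv
  rw [Matrix.toLin'_apply, Matrix.toLin'_apply, symp_exp]
  refine Submodule.span_induction (p := fun x _ => ∀ y ∈ Submodule.span ℂ
      ((fun i : Fin (2 * m) => (Pi.single i 1 : Fin (2 * m) → ℂ)) '' {i | (i : ℕ) < b}),
      symp m x y = 0) ?_ ?_ ?_ ?_ hx y hy
  · rintro x ⟨k, hk, rfl⟩ y hy
    refine Submodule.span_induction (p := fun y _ => symp m _ y = 0) ?_ ?_ ?_ ?_ hy
    · rintro y ⟨l, hl, rfl⟩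
      have hk' : (k : ℕ) < a := hk
      have hl' : (l : ℕ) < b := hl
      exact symp_single m k l (by omega)
    · exact symp_zero_right m _
    · intro y z _ _ h1 h2; rw [symp_add_right, h1, h2, add_zero]
    · intro c y _ h1; rw [symp_smul_right, h1, mul_zero]
  · intro y _; exact symp_zero_left m y
  · intro x x' _ _ h1 h2 y hy; rw [symp_add_left, h1 y hy, h2 y hy, add_zero]
  · intro c x _ h1 y hy; rw [symp_smul_left, h1 y hy, mul_zero]

lemma osc_finrank (m : ℕ) (t : ℂ) : Module.finrank ℂ (osc m m t) = m := by
  have hMdet : IsUnit (exp (t • eta m)).det :=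
    (Matrix.isUnit_iff_isUnit_det _).mp (Matrix.isUnit_exp _)
  have hinj : Function.Injective (Matrix.toLin' (exp (t • eta m))) := by
    intro x y h
    have h' : exp (t • eta m) *ᵥ x = exp (t • eta m) *ᵥ y := by
      rwa [Matrix.toLin'_apply, Matrix.toLin'_apply] at h
    have h2 := congrArg (fun z => (exp (t • eta m))⁻¹ *ᵥ z) h'
    simpa [Matrix.mulVec_mulVec, Matrix.nonsing_inv_mul _ hMdet] using h2
  have hequiv := (Submodule.equivMapOfInjective (Matrix.toLin' (exp (t • eta m))) hinj
    (Submodule.span ℂ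
      ((fun i : Fin (2 * m) => (Pi.single i 1 : Fin (2 * m) → ℂ)) '' {i | (i : ℕ) < m}))).finrank_eq
  rw [osc, ← hequiv]
  rw [Set.image_eq_range]
  have hli : LinearIndependent ℂ
      (fun x : ↥{i : Fin (2 * m) | (i : ℕ) < m} => (Pi.single (x : Fin (2 * m)) 1 : Fin (2 * m) → ℂ)) := by
    have hb : (fun x : ↥{i : Fin (2 * m) | (i : ℕ) < m} =>
        (Pi.single (x : Fin (2 * m)) 1 : Fin (2 * m) → ℂ)) =
        (Pi.basisFun ℂ (Fin (2 * m))) ∘ (fun x : ↥{i : Fin (2 * m) | (i : ℕ) < m} => (x : Fin (2 * m))) := by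
      funext j; simp
    rw [hb]
    exact (Pi.basisFun ℂ (Fin (2 * m))).linearIndependent.comp _ Subtype.val_injective
  rw [finrank_span_eq_card hli]
  have : Fintype.card ↥{i : Fin (2 * m) | (i : ℕ) < m} = Fintype.card (Fin m) :=
    Fintype.card_congr
      ⟨fun j => ⟨(j : Fin (2 * m)), j.2⟩,
       fun j => ⟨⟨(j : ℕ), by have := j.isLt; omega⟩, j.isLt⟩,
       fun j => by ext; rfl, fun j => by ext; rfl⟩
  rw [this, Fintype.card_fin]

/-- **Lemma.**  For every `t ∈ ℂ` the flag of osculating subspaces is isotropic: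
`⟨F_i(t), F_{2m−i}(t)⟩ ≡ 0` for `1 ≤ i ≤ 2m−1`; in particular `F_m(t)` is a Lagrangian
subspace of `ℂ^{2m}`. -/
theorem osculating_flag_isotropic (m : ℕ) (hm : 1 ≤ m) (t : ℂ) :
    (∀ i : ℕ, 1 ≤ i → i ≤ 2 * m - 1 →
      ∀ u ∈ osc m i t, ∀ v ∈ osc m (2 * m - i) t, symp m u v = 0) ∧
    (Module.finrank ℂ (osc m m t) = m ∧
      ∀ u ∈ osc m m t, ∀ v ∈ osc m m t, symp m u v = 0) := by
  refine ⟨fun i h1 h2 => osc_pair m i (2 * m - i) (by omega) t,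
    osc_finrank m t, osc_pair m m m (by omega) t⟩
end

section
/- Fix m ≥ 1. For all distinct complex numbers a ≠ b and all 0 ≤ i, j ≤ 2m, the osculating subspaces of the rational normal curve satisfy dim(F_i(a) ∩ F_j(b)) = max(0, i + j − 2m); that is, the flags F_•(a) and F_•(b) are in linear general position. -/
open NormedSpace Polynomial


lemma eta_apply (m : ℕ) (i j : Fin (2*m)) :
    eta m i j = if (i : ℕ) = (j : ℕ) + 1 then 1 else 0 := rfl

lemma eta_pow (m k : ℕ) :
    (eta m) ^ k = Matrix.of fun i j : Fin (2*m) => if (i:ℕ) = (j:ℕ) + k then 1 else 0 := by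
  induction k with
  | zero =>
    ext i j
    simp [Matrix.one_apply, Fin.ext_iff]
  | succ k ih =>
    ext i j
    rw [pow_succ', ih, Matrix.mul_apply]
    simp only [eta_apply, Matrix.of_apply, ite_mul, one_mul, zero_mul]
    by_cases h : (j:ℕ) + k < 2*m
    · rw [Finset.sum_eq_single (⟨(j:ℕ)+k, h⟩ : Fin (2*m))]
      · simp only [mul_ite, mul_one, mul_zero, if_pos rfl]
        have : ((i:ℕ) = (j:ℕ) + k + 1) ↔ ((i:ℕ) = (j:ℕ) + (k+1)) := by omega
        simp [this]
      · intro l _ hl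
        have : ¬ ((l:ℕ) = (j:ℕ) + k) := fun hh => hl (Fin.ext hh)
        simp [this]
      · simp
    · have h2 : ∀ l : Fin (2*m), ¬ ((l:ℕ) = (j:ℕ) + k) := fun l hl => h (hl ▸ l.isLt)
      have h3 : ¬ ((i:ℕ) = (j:ℕ) + (k+1)) := by have := i.isLt; omega
      simp [h2, h3]

lemma eta_pow_eq_zero (m k : ℕ) (hk : 2*m ≤ k) : (eta m) ^ k = 0 := by
  rw [eta_pow]
  ext i j
  have : ¬ ((i:ℕ) = (j:ℕ) + k) := by have := i.isLt; omega
  simp [this]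

lemma exp_eta (m : ℕ) (t : ℂ) :
    exp (t • eta m)
      = ∑ k ∈ Finset.range (2*m), (t^k * ((k.factorial : ℂ))⁻¹) • (_root_.eta m)^k := by
  rw [exp_eq_tsum (𝕂 := ℂ)]
  simp only []
  show (∑' n : ℕ, ((n.factorial:ℂ))⁻¹ • (t • eta m) ^ n) = _
  rw [tsum_eq_sum (s := Finset.range (2*m))
    (fun k hk => by
      rw [_root_.smul_pow, eta_pow_eq_zero m k (by simpa using hk)]
      simp)]
  refine Finset.sum_congr rfl fun k _ => ?_
  rw [_root_.smul_pow, smul_smul, mul_comm (t^k)]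

lemma exp_eta_apply (m : ℕ) (t : ℂ) (i j : Fin (2*m)) :
    exp (t • eta m) i j
      = if (j:ℕ) ≤ (i:ℕ) then t^((i:ℕ)-(j:ℕ)) * ((((i:ℕ)-(j:ℕ)).factorial : ℂ))⁻¹ else 0 := by
  rw [exp_eta]
  rw [Matrix.sum_apply]
  simp only [Matrix.smul_apply, eta_pow, Matrix.of_apply, smul_eq_mul, mul_ite, mul_one, mul_zero]
  by_cases h : (j:ℕ) ≤ (i:ℕ)
  · rw [Finset.sum_eq_single ((i:ℕ)-(j:ℕ))]
    · have : (i:ℕ) = (j:ℕ) + ((i:ℕ)-(j:ℕ)) := by omega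
      rw [if_pos this, if_pos h]
    · intro k _ hk
      have : ¬ ((i:ℕ) = (j:ℕ) + k) := by omega
      rw [if_neg this]
    · intro hmem
      have : (i:ℕ)-(j:ℕ) < 2*m := by have := i.isLt; omega
      exact absurd (Finset.mem_range.mpr this) hmem
  · have h2 : ∀ k, ¬ ((i:ℕ) = (j:ℕ) + k) := by omega
    simp [h2, h]

noncomputable def phi (m : ℕ) : (Fin (2*m) → ℂ) →ₗ[ℂ] Polynomial ℂ where
  toFun v := ∑ i : Fin (2*m),
    C (v i * (((2*m - 1 - (i:ℕ)).factorial : ℂ))⁻¹) * X ^ (2*m - 1 - (i:ℕ))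
  map_add' v w := by
    rw [← Finset.sum_add_distrib]
    refine Finset.sum_congr rfl fun i _ => ?_
    simp [add_mul, C_add]
  map_smul' c v := by
    dsimp only [RingHom.id_apply]
    rw [Finset.smul_sum]
    refine Finset.sum_congr rfl fun i _ => ?_
    simp [Polynomial.smul_eq_C_mul, mul_assoc, C_mul]

lemma phi_coeff (m : ℕ) (v : Fin (2*m) → ℂ) (q : ℕ) :
    (phi m v).coeff q
      = ∑ i : Fin (2*m),
          if q = 2*m - 1 - (i:ℕ) then v i * (((2*m - 1 - (i:ℕ)).factorial : ℂ))⁻¹ else 0 := by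
  show (∑ i : Fin (2*m), C (v i * _) * X ^ _).coeff q = _
  rw [Polynomial.finset_sum_coeff]
  refine Finset.sum_congr rfl fun i _ => ?_
  rw [Polynomial.coeff_C_mul, Polynomial.coeff_X_pow, mul_ite, mul_one, mul_zero]

lemma phi_injective (m : ℕ) (hm : 1 ≤ m) : Function.Injective (phi m) := by
  rw [← LinearMap.ker_eq_bot, LinearMap.ker_eq_bot']
  intro v hv
  funext i
  have h := congrArg (fun p : Polynomial ℂ => p.coeff (2*m - 1 - (i:ℕ))) hv
  simp only [Polynomial.coeff_zero] at h
  rw [phi_coeff] at h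
  rw [Finset.sum_eq_single i] at h
  · rw [if_pos rfl] at h
    have hf : (((2*m - 1 - (i:ℕ)).factorial : ℂ))⁻¹ ≠ 0 :=
      inv_ne_zero (Nat.cast_ne_zero.mpr (Nat.factorial_ne_zero _))
    have := mul_eq_zero.mp h
    simpa [hf] using this
  · intro k _ hk
    have hik : (i:ℕ) ≠ (k:ℕ) := fun hh => hk (Fin.ext hh.symm)
    have : ¬ (2*m - 1 - (i:ℕ) = 2*m - 1 - (k:ℕ)) := by
      have := i.isLt; have := k.isLt; omega
    rw [if_neg this]
  · intro hmem
    exact absurd (Finset.mem_univ i) hmem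

lemma phi_col (m : ℕ) (t : ℂ) (k : Fin (2*m)) :
    phi m (fun i => NormedSpace.exp (t • eta m) i k)
      = C ((((2*m - 1 - (k:ℕ)).factorial : ℂ))⁻¹) * (X + C t) ^ (2*m - 1 - (k:ℕ)) := by
  set p : ℕ := 2*m - 1 - (k:ℕ) with hp
  ext q
  rw [phi_coeff, Polynomial.coeff_C_mul, Polynomial.coeff_X_add_C_pow]
  by_cases hq : q < 2*m
  · have hi0 : 2*m - 1 - q < 2*m := by omega
    rw [Finset.sum_eq_single (⟨2*m - 1 - q, hi0⟩ : Fin (2*m))]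
    · have he : q = 2*m - 1 - ((⟨2*m - 1 - q, hi0⟩ : Fin (2*m)):ℕ) := by
        simp only [Fin.val_mk]; omega
      rw [if_pos he, exp_eta_apply]
      simp only [Fin.val_mk]
      have h2 : 2*m - 1 - (2*m - 1 - q) = q := by omega
      rw [h2]
      by_cases hk : (k:ℕ) ≤ 2*m - 1 - q
      · rw [if_pos hk]
        have hqp : q ≤ p := by have := k.isLt; omega
        have e1 : 2*m - 1 - q - (k:ℕ) = p - q := by omega
        rw [e1, Nat.cast_choose ℂ hqp]
        have f1 : ((q.factorial : ℂ)) ≠ 0 := Nat.cast_ne_zero.mpr (Nat.factorial_ne_zero _)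
        have f2 : (((p-q).factorial : ℂ)) ≠ 0 := Nat.cast_ne_zero.mpr (Nat.factorial_ne_zero _)
        have f3 : ((p.factorial : ℂ)) ≠ 0 := Nat.cast_ne_zero.mpr (Nat.factorial_ne_zero _)
        field_simp
      · rw [if_neg hk]
        have hqp : p < q := by have := k.isLt; omega
        rw [Nat.choose_eq_zero_of_lt hqp]
        simp
    · intro l _ hl
      have hlv : (l:ℕ) ≠ 2*m - 1 - q := fun hh => hl (Fin.ext hh)
      have : ¬ (q = 2*m - 1 - (l:ℕ)) := by have := l.isLt; omega
      rw [if_neg this]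
    · intro hmem; exact absurd (Finset.mem_univ _) hmem
  · have h1 : ∀ i : Fin (2*m), ¬ (q = 2*m - 1 - (i:ℕ)) := by
      intro i; have := i.isLt; omega
    simp only [h1, if_false, Finset.sum_const_zero]
    have hqp : p < q := by have := k.isLt; omega
    rw [Nat.choose_eq_zero_of_lt hqp]
    simp

lemma phi_dvd_of_mem_osc (m j : ℕ) (t : ℂ) (hj : j ≤ 2*m) {v : Fin (2*m) → ℂ}
    (hv : v ∈ osc m j t) : (X + C t) ^ (2*m - j) ∣ phi m v := by
  obtain ⟨w, hw, rfl⟩ := hv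
  induction hw using Submodule.span_induction with
  | mem x hx =>
    obtain ⟨i0, hi0, rfl⟩ := hx
    have hcol : (Matrix.toLin' (exp (t • eta m))) (Pi.single i0 1)
        = fun i => exp (t • eta m) i i0 := by
      rw [Matrix.toLin'_apply, Matrix.mulVec_single]
      funext i; exact mul_one _
    rw [hcol, phi_col]
    refine Dvd.dvd.mul_left ?_ _
    exact pow_dvd_pow _ (by simp only [Set.mem_setOf_eq] at hi0; omega)
  | zero => simp
  | add x y _ _ hx hy => rw [map_add, map_add]; exact dvd_add hx hy
  | smul c x _ hx =>
    rw [map_smul, map_smul, Polynomial.smul_eq_C_mul]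
    exact hx.mul_left _

lemma phi_degree_lt (m : ℕ) (v : Fin (2*m) → ℂ) : (phi m v).degree < (2*m : ℕ) := by
  have h0 : (phi m v) = ∑ i : Fin (2*m),
      C (v i * (((2*m - 1 - (i:ℕ)).factorial : ℂ))⁻¹) * X ^ (2*m - 1 - (i:ℕ)) := rfl
  rw [h0]
  refine lt_of_le_of_lt (Polynomial.degree_sum_le _ _) ?_
  rw [Finset.sup_lt_iff]
  · intro i _
    refine lt_of_le_of_lt (Polynomial.degree_C_mul_X_pow_le _ _) ?_
    exact_mod_cast Nat.lt_of_le_of_lt (Nat.le_refl _) (by have := i.isLt; omega)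
  · exact WithBot.bot_lt_coe _

lemma osc_inf_eq_bot (m : ℕ) (hm : 1 ≤ m) {a b : ℂ} (hab : a ≠ b) {i j : ℕ}
    (hi : i ≤ 2*m) (hj : j ≤ 2*m) (hij : i + j ≤ 2*m) :
    osc m i a ⊓ osc m j b = ⊥ := by
  rw [eq_bot_iff]
  rintro v ⟨hva, hvb⟩
  have d1 := phi_dvd_of_mem_osc m i a hi hva
  have d2 := phi_dvd_of_mem_osc m j b hj hvb
  have hcop : IsCoprime ((X + C a) : Polynomial ℂ) (X + C b) := by
    refine ⟨C (a-b)⁻¹, -C (a-b)⁻¹, ?_⟩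
    have hne : (a - b) ≠ 0 := sub_ne_zero.mpr hab
    have h1 : C (a-b)⁻¹ * (X + C a) + -C (a-b)⁻¹ * (X + C b)
        = C ((a-b)⁻¹ * (a-b)) := by
      rw [C_mul, C_sub]; ring
    rw [h1, inv_mul_cancel₀ hne, C_1]
  have hd : ((X + C a)^(2*m-i) * (X + C b)^(2*m-j)) ∣ phi m v :=
    ((hcop.pow).mul_dvd d1 d2)
  have hz : phi m v = 0 := by
    by_contra hnz
    have hdeg := Polynomial.degree_le_of_dvd hd hnz
    rw [degree_mul, degree_pow, degree_pow, degree_X_add_C, degree_X_add_C] at hdeg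
    have hlt := lt_of_le_of_lt hdeg (phi_degree_lt m v)
    simp only [nsmul_eq_mul, mul_one] at hlt
    have : (2*m-i) + (2*m-j) < 2*m := by exact_mod_cast hlt
    omega
  have : v = 0 := phi_injective m hm (by rw [hz, map_zero])
  simp [this]

lemma osc_mono (m : ℕ) (t : ℂ) {i i' : ℕ} (h : i ≤ i') : osc m i t ≤ osc m i' t :=
  Submodule.map_mono (Submodule.span_mono
    (Set.image_mono fun x hx => lt_of_lt_of_le hx h))

lemma finrank_osc (m j : ℕ) (t : ℂ) (hj : j ≤ 2*m) :
    Module.finrank ℂ (osc m j t) = j := by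
  have hcomm : Commute (t • eta m) (-(t • eta m)) := (Commute.refl _).neg_right
  have h1 : exp (t • eta m) * exp (-(t • eta m)) = 1 := by
    rw [← Matrix.exp_add_of_commute _ _ hcomm, add_neg_cancel, exp_zero]
  have h2 : exp (-(t • eta m)) * exp (t • eta m) = 1 := by
    rw [← Matrix.exp_add_of_commute _ _ hcomm.symm, neg_add_cancel, exp_zero]
  letI inv : Invertible (exp (t • eta m)) := ⟨exp (-(t • eta m)), h2, h1⟩
  set e := Matrix.toLinearEquiv' (exp (t • eta m)) inv with he
  set S := Submodule.span ℂ
      ((fun i : Fin (2 * m) => (Pi.single i 1 : Fin (2 * m) → ℂ)) '' {i | (i : ℕ) < j}) with hS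
  have hmap : osc m j t = Submodule.map (e : (Fin (2*m) → ℂ) →ₗ[ℂ] (Fin (2*m) → ℂ)) S := by
    rw [he, Matrix.toLinearEquiv'_apply]; rfl
  rw [hmap, LinearEquiv.finrank_map_eq]
  have hli : LinearIndependent ℂ
      (fun x : {i : Fin (2*m) // (i:ℕ) < j} => (Pi.single (x : Fin (2*m)) 1 : Fin (2*m) → ℂ)) := by
    have hb := (Pi.basisFun ℂ (Fin (2*m))).linearIndependent
    have h := hb.comp (fun x : {i : Fin (2*m) // (i:ℕ) < j} => (x : Fin (2*m)))
      Subtype.val_injective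
    have h2 : (⇑(Pi.basisFun ℂ (Fin (2*m))) ∘ fun x : {i : Fin (2*m) // (i:ℕ) < j} =>
        (x : Fin (2*m))) = fun x : {i : Fin (2*m) // (i:ℕ) < j} =>
        (Pi.single (x : Fin (2*m)) 1 : Fin (2*m) → ℂ) := by
      funext x; simp
    exact h2 ▸ h
  have hrange : Set.range
      (fun x : {i : Fin (2*m) // (i:ℕ) < j} => (Pi.single (x : Fin (2*m)) 1 : Fin (2*m) → ℂ))
      = (fun i : Fin (2 * m) => (Pi.single i 1 : Fin (2 * m) → ℂ)) '' {i | (i : ℕ) < j} := by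
    ext y
    constructor
    · rintro ⟨x, rfl⟩; exact ⟨x.1, x.2, rfl⟩
    · rintro ⟨x, hx, rfl⟩; exact ⟨⟨x, hx⟩, rfl⟩
  rw [hS, ← hrange, finrank_span_eq_card hli]
  have : {i : Fin (2*m) // (i:ℕ) < j} ≃ Fin j :=
    ⟨fun x => ⟨x.1, x.2⟩, fun y => ⟨⟨y.1, lt_of_lt_of_le y.2 hj⟩, y.2⟩,
     fun x => rfl, fun y => rfl⟩
  rw [Fintype.card_congr this, Fintype.card_fin]

/-- **Lemma (linear general position).**  For distinct points `a ≠ b` of `ℂ` and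
`0 ≤ i, j ≤ 2m`, the osculating subspaces satisfy
`dim (F_i(a) ∩ F_j(b)) = max 0 (i + j − 2m)` (the right-hand side below is truncated natural
subtraction). -/
theorem osculating_flags_linear_general_position (m : ℕ) (hm : 1 ≤ m)
    (a b : ℂ) (hab : a ≠ b) (i j : ℕ) (hi : i ≤ 2 * m) (hj : j ≤ 2 * m) :
    Module.finrank ℂ ↥(osc m i a ⊓ osc m j b) = i + j - 2 * m := by
  by_cases hij : i + j ≤ 2*m
  · rw [osc_inf_eq_bot m hm hab hi hj hij, finrank_bot]
    omega
  · push_neg at hij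
    set W := osc m i a ⊓ osc m j b with hW
    set i' := 2*m - j with hi'
    have hi'i : i' ≤ i := by omega
    have hbot : W ⊓ osc m i' a = ⊥ := by
      rw [eq_bot_iff]
      refine le_trans ?_ (osc_inf_eq_bot m hm hab (i := i') (j := j) (by omega) hj (by omega)).le
      intro v hv
      exact ⟨hv.2, hv.1.2⟩
    -- upper bound
    have hsum := Submodule.finrank_sup_add_finrank_inf_eq W (osc m i' a)
    rw [hbot, finrank_bot, add_zero] at hsum
    have hle : W ⊔ osc m i' a ≤ osc m i a :=
      sup_le (hW ▸ inf_le_left) (osc_mono m a hi'i)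
    have hup : Module.finrank ℂ W + i' ≤ i := by
      rw [← finrank_osc m i a hi, ← finrank_osc m i' a (by omega), ← hsum]
      exact Submodule.finrank_mono hle
    -- lower bound
    have hsum2 := Submodule.finrank_sup_add_finrank_inf_eq (osc m i a) (osc m j b)
    have htop : Module.finrank ℂ ↥(osc m i a ⊔ osc m j b) ≤ 2*m := by
      have h := Submodule.finrank_le (osc m i a ⊔ osc m j b)
      rwa [Module.finrank_fin_fun] at h
    rw [finrank_osc m i a hi, finrank_osc m j b hj, ← hW] at hsum2
    show Module.finrank ℂ ↥W = i + j - 2 * m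
    omega
end

section
/- Let K be a field, V a 2m-dimensional K-vector space equipped with a nondegenerate alternating bilinear form ⟨,⟩, F_• a flag in V, and λ a partition with m ≥ λ_1 ≥ … ≥ λ_m ≥ 0. Then for every m-dimensional subspace H of V: H belongs to the Schubert variety X_λF_• if and only if H^∠ belongs to X_{λᵀ}F_•^∠, where λᵀ is the transpose partition. Equivalently, the Lagrangian involution H ↦ H^∠ maps X_λF_• onto X_{λᵀ}F_•^∠. -/
/-- The orthogonal subspace `W^∠ = {v : ⟨u,v⟩ = 0 for all u ∈ W}` of a subspace `W` with
respect to a bilinear form `ω`. -/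
def angleOrtho {K V : Type*} [Field K] [AddCommGroup V] [Module K V]
    (ω : V →ₗ[K] V →ₗ[K] K) (W : Submodule K V) : Submodule K V where
  carrier := {v | ∀ u ∈ W, ω u v = 0}
  add_mem' := by
    intro a b ha hb u hu
    simp [map_add, ha u hu, hb u hu]
  zero_mem' := by
    intro u hu
    simp
  smul_mem' := by
    intro c a ha u hu
    simp [map_smul, ha u hu]

/-- Membership in the Schubert variety `X_λ F_•` of `Gr(m, V)` (`dim V = 2m`): `H` is
`m`-dimensional and `dim (H ∩ F_{m+i−λ_i}) ≥ i` for `i = 1,…,m` (here `lam i` is `λ_{i+1}`,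
0-based). -/
def InSchubert {K V : Type*} [Field K] [AddCommGroup V] [Module K V] (m : ℕ)
    (lam : Fin m → ℕ) (F : ℕ → Submodule K V) (H : Submodule K V) : Prop :=
  Module.finrank K H = m ∧
    ∀ i : Fin m, (i : ℕ) + 1 ≤ Module.finrank K ↥(H ⊓ F (m + ((i : ℕ) + 1) - lam i))

open Module

section Aux
variable {K V : Type*} [Field K] [AddCommGroup V] [Module K V]

lemma mem_angleOrtho (ω : V →ₗ[K] V →ₗ[K] K) (W : Submodule K V) (v : V) :
    v ∈ angleOrtho ω W ↔ ∀ u ∈ W, ω u v = 0 := Iff.rfl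

lemma angleOrtho_eq_comap (ω : V →ₗ[K] V →ₗ[K] K) (W : Submodule K V) :
    angleOrtho ω W = W.dualAnnihilator.comap ω.flip := by
  ext v
  simp [mem_angleOrtho, Submodule.mem_comap, Submodule.mem_dualAnnihilator]

lemma angleOrtho_sup (ω : V →ₗ[K] V →ₗ[K] K) (A B : Submodule K V) :
    angleOrtho ω (A ⊔ B) = angleOrtho ω A ⊓ angleOrtho ω B := by
  ext v
  simp only [Submodule.mem_inf, mem_angleOrtho]
  constructor
  · exact fun h => ⟨fun u hu => h u (Submodule.mem_sup_left hu),
      fun u hu => h u (Submodule.mem_sup_right hu)⟩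
  · rintro ⟨h1, h2⟩ u hu
    obtain ⟨a, ha, b, hb, rfl⟩ := Submodule.mem_sup.1 hu
    simp [h1 a ha, h2 b hb]

variable [FiniteDimensional K V]

lemma finrank_angleOrtho (ω : V →ₗ[K] V →ₗ[K] K)
    (hnondeg : ∀ v : V, (∀ u : V, ω u v = 0) → v = 0) (W : Submodule K V) :
    finrank K (angleOrtho ω W) = finrank K V - finrank K W := by
  have hinj : Function.Injective (ω.flip : V →ₗ[K] Module.Dual K V) := by
    rw [← LinearMap.ker_eq_bot]
    ext v
    simp only [LinearMap.mem_ker, Submodule.mem_bot]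
    constructor
    · intro h
      exact hnondeg v (fun u => by simpa using congrArg (fun f => f u) h)
    · rintro rfl; simp
  have hsurj : Function.Surjective (ω.flip : V →ₗ[K] Module.Dual K V) := by
    rw [← LinearMap.range_eq_top]
    apply Submodule.eq_top_of_finrank_eq
    rw [Subspace.dual_finrank_eq]
    have h := LinearMap.finrank_range_add_finrank_ker (ω.flip : V →ₗ[K] Module.Dual K V)
    rw [LinearMap.ker_eq_bot.2 hinj, finrank_bot, add_zero] at h
    exact h
  let e : V ≃ₗ[K] Module.Dual K V := LinearEquiv.ofBijective ω.flip ⟨hinj, hsurj⟩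
  have hcomap : angleOrtho ω W = W.dualAnnihilator.comap (e : V →ₗ[K] Module.Dual K V) := by
    rw [angleOrtho_eq_comap]; rfl
  rw [hcomap, Submodule.comap_equiv_eq_map_symm, LinearEquiv.finrank_map_eq]
  have h1 : finrank K (V ⧸ W) = finrank K W.dualAnnihilator :=
    LinearEquiv.finrank_eq (Subspace.quotEquivAnnihilator W)
  have h2 := Submodule.finrank_quotient_add_finrank W
  omega

lemma card_filter_val_lt (m c : ℕ) (hc : c ≤ m) :
    (Finset.univ.filter (fun q : Fin m => q.val < c)).card = c := by
  have h : (Finset.univ.filter (fun q : Fin m => q.val < c)) =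
      (Finset.range c).attachFin (fun x hx => lt_of_lt_of_le (Finset.mem_range.1 hx) hc) := by
    ext q
    simp [Finset.mem_attachFin]
  rw [h, Finset.card_attachFin, Finset.card_range]

end Aux

/-- **Lemma.**  Let `V` be a `2m`-dimensional space with a nondegenerate alternating form,
`F_•` a flag, and `λ` a partition.  Then for any `m`-dimensional subspace `H`:
`H ∈ X_λ F_•` if and only if `H^∠ ∈ X_{λᵀ} F_•^∠`, where `λᵀ` is the transpose partition and
`F_•^∠` is the flag `i ↦ (F_{2m−i})^∠`. -/
theorem lagrangian_involution_maps_schubert_to_transpose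
    {K V : Type*} [Field K] [AddCommGroup V] [Module K V] [FiniteDimensional K V]
    (m : ℕ) (hm : 1 ≤ m) (hdim : Module.finrank K V = 2 * m)
    (ω : V →ₗ[K] V →ₗ[K] K)
    (halt : ∀ v : V, ω v v = 0)
    (hnondeg : ∀ v : V, (∀ u : V, ω u v = 0) → v = 0)
    (F : ℕ → Submodule K V)
    (hmono : ∀ i j : ℕ, i ≤ j → F i ≤ F j)
    (hrank : ∀ i : ℕ, i ≤ 2 * m → Module.finrank K (F i) = i)
    (lam : Fin m → ℕ) (hlam : ∀ i, lam i ≤ m)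
    (hanti : ∀ i j : Fin m, i ≤ j → lam j ≤ lam i)
    (H : Submodule K V) (hH : Module.finrank K H = m) :
    InSchubert m lam F H ↔
      InSchubert m
        (fun i => (Finset.univ.filter fun j : Fin m => (i : ℕ) + 1 ≤ lam j).card)
        (fun i => angleOrtho ω (F (2 * m - i))) (angleOrtho ω H) := by
  classical
  set r : ℕ → ℕ := fun k => finrank K ↥(H ⊓ F k) with hr
  set T : Fin m → ℕ := fun i => (Finset.univ.filter fun j : Fin m => (i : ℕ) + 1 ≤ lam j).card
    with hT
  have hTm : ∀ i, T i ≤ m := by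
    intro i
    calc T i ≤ Finset.univ.card := Finset.card_filter_le _ _
    _ = m := by simp
  have fact1 : ∀ k, k ≤ 2 * m → finrank K ↥(H ⊔ F k) + r k = m + k := by
    intro k hk
    have h := Submodule.finrank_sup_add_finrank_inf_eq H (F k)
    rw [hH, hrank k hk] at h
    exact h
  have rmono : ∀ k l, k ≤ l → r k ≤ r l := fun k l h =>
    Submodule.finrank_mono (inf_le_inf_left H (hmono k l h))
  have rlip : ∀ k l, k ≤ l → l ≤ 2 * m → r l + k ≤ r k + l := by
    intro k l hkl hl
    have h1 := Submodule.finrank_sup_add_finrank_inf_eq (H ⊓ F l) (F k)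
    have h2 : (H ⊓ F l) ⊓ F k = H ⊓ F k := by
      rw [inf_assoc, inf_eq_right.2 (hmono k l hkl)]
    have h3 : finrank K ↥((H ⊓ F l) ⊔ F k) ≤ l :=
      le_trans (Submodule.finrank_mono (sup_le inf_le_right (hmono k l hkl)))
        (le_of_eq (hrank l hl))
    rw [h2, hrank k (le_trans hkl hl)] at h1
    have h4 : finrank K ↥(H ⊓ F l) = r l := rfl
    have h5 : finrank K ↥(H ⊓ F k) = r k := rfl
    omega
  have rlow : ∀ k, k ≤ 2 * m → k ≤ m + r k := by
    intro k hk
    have h1 := fact1 k hk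
    have h2 : finrank K ↥(H ⊔ F k) ≤ 2 * m := hdim ▸ Submodule.finrank_le _
    omega
  have hOrthoH : finrank K ↥(angleOrtho ω H) = m := by
    rw [finrank_angleOrtho ω hnondeg, hdim, hH]; omega
  have hOrthoInf : ∀ k, k ≤ 2 * m →
      finrank K ↥(angleOrtho ω H ⊓ angleOrtho ω (F k)) = 2 * m - finrank K ↥(H ⊔ F k) := by
    intro k hk
    rw [← angleOrtho_sup, finrank_angleOrtho ω hnondeg, hdim]
  have hRHScond : ∀ i : Fin m,
      (((i : ℕ) + 1) ≤ finrank K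
          ↥(angleOrtho ω H ⊓ angleOrtho ω (F (2 * m - (m + ((i : ℕ) + 1) - T i)))) ↔
        T i ≤ r (m - ((i : ℕ) + 1) + T i)) := by
    intro i
    have hil : (i : ℕ) + 1 ≤ m := i.isLt
    have htm := hTm i
    have hidx : 2 * m - (m + ((i : ℕ) + 1) - T i) = m - ((i : ℕ) + 1) + T i := by omega
    rw [hidx]
    set k := m - ((i : ℕ) + 1) + T i with hk
    have hk2 : k ≤ 2 * m := by omega
    rw [hOrthoInf k hk2]
    have h1 := fact1 k hk2
    have h2 : finrank K ↥(H ⊔ F k) ≤ 2 * m := hdim ▸ Submodule.finrank_le _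
    omega
  constructor
  · rintro ⟨-, hcond⟩
    refine ⟨hOrthoH, ?_⟩
    intro i
    refine (hRHScond i).2 ?_
    by_cases ht0 : T i = 0
    · rw [ht0]; exact Nat.zero_le _
    have ht1 : 1 ≤ T i := Nat.one_le_iff_ne_zero.2 ht0
    have htm := hTm i
    have hil : (i : ℕ) + 1 ≤ m := i.isLt
    set p : Fin m := ⟨T i - 1, by omega⟩ with hp
    have hpv : (p : ℕ) = T i - 1 := rfl
    have hjp : (i : ℕ) + 1 ≤ lam p := by
      by_contra hcon
      push_neg at hcon
      have hsub : (Finset.univ.filter fun q : Fin m => (i : ℕ) + 1 ≤ lam q) ⊆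
          Finset.univ.filter (fun q : Fin m => q.val < T i - 1) := by
        intro q hq
        simp only [Finset.mem_filter, Finset.mem_univ, true_and] at hq ⊢
        by_contra hq2
        push_neg at hq2
        have hpq : p ≤ q := by
          rw [Fin.le_def, hpv]
          exact hq2
        have := hanti p q hpq
        omega
      have hcard := Finset.card_le_card hsub
      rw [card_filter_val_lt m (T i - 1) (by omega)] at hcard
      have : T i ≤ T i - 1 := hcard
      omega
    have hc := hcond p
    have hpv1 : (p : ℕ) + 1 = T i := by rw [hpv]; omega
    rw [hpv1] at hc
    have hle : m + T i - lam p ≤ m - ((i : ℕ) + 1) + T i := by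
      have := hlam p
      omega
    exact le_trans hc (rmono _ _ hle)
  · rintro ⟨-, hcond⟩
    refine ⟨hH, ?_⟩
    intro i
    show (i : ℕ) + 1 ≤ r (m + ((i : ℕ) + 1) - lam i)
    have hil : (i : ℕ) + 1 ≤ m := i.isLt
    by_cases hl0 : lam i = 0
    · rw [hl0, Nat.sub_zero]
      have := rlow (m + ((i : ℕ) + 1)) (by omega)
      omega
    have hl1 : 1 ≤ lam i := Nat.one_le_iff_ne_zero.2 hl0
    have hlm := hlam i
    set p : Fin m := ⟨lam i - 1, by omega⟩ with hp
    have hpv1 : (p : ℕ) + 1 = lam i := by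
      have : (p : ℕ) = lam i - 1 := rfl
      omega
    have hc : T p ≤ r (m - ((p : ℕ) + 1) + T p) := (hRHScond p).1 (hcond p)
    rw [hpv1] at hc
    have htm : T p ≤ m := hTm p
    have hjt : (i : ℕ) + 1 ≤ T p := by
      have hsub : Finset.univ.filter (fun q : Fin m => q.val < (i : ℕ) + 1) ⊆
          Finset.univ.filter fun q : Fin m => (p : ℕ) + 1 ≤ lam q := by
        intro q hq
        simp only [Finset.mem_filter, Finset.mem_univ, true_and] at hq ⊢
        have hqi : q ≤ i := by
          rw [Fin.le_def]; omega
        have := hanti q i hqi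
        omega
      have hcard := Finset.card_le_card hsub
      rwa [card_filter_val_lt m ((i : ℕ) + 1) hil] at hcard
    have hk1 : m + ((i : ℕ) + 1) - lam i ≤ m - lam i + T p := by omega
    have hl2 : m - lam i + T p ≤ 2 * m := by omega
    have hlp := rlip (m + ((i : ℕ) + 1) - lam i) (m - lam i + T p) hk1 hl2
    omega
end

section
/- Let μ ⊆ ν be Young diagrams and let S = ν \ μ be the set of cells of the skew shape, with n = |S|. Assume S is symmetric, i.e., (i,j) ∈ S if and only if (j,i) ∈ S, and that the number of cells (i,j) ∈ S with i < j (boxes strictly above the main diagonal) is odd. Then the sign-imbalance of S is zero: for every standard tableau T₀ of shape S, the sum over all standard tableaux T of shape S of the sign of the permutation T ∘ T₀⁻¹ of {1,…,n} equals 0. -/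
open scoped Classical

def IsStdTableau (S : Finset (ℕ × ℕ)) (T : {x // x ∈ S} ≃ Fin S.card) : Prop :=
  ∀ a b : {x // x ∈ S}, a ≠ b → a.1.1 ≤ b.1.1 → a.1.2 ≤ b.1.2 → T a < T b

/-- Sign of an involution whose non-fixed points are paired off by a finset `A`. -/
lemma sign_involutive_eq {α : Type*} [DecidableEq α] [Fintype α] (A : Finset α) :
    ∀ (τ : Equiv.Perm α), Function.Involutive τ →
    (∀ a ∈ A, τ a ∉ A) → (∀ a ∈ A, τ a ≠ a) →
    (∀ x, τ x ≠ x → x ∈ A ∨ τ x ∈ A) →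
    Equiv.Perm.sign τ = (-1) ^ A.card := by
  induction A using Finset.induction_on with
  | empty =>
    intro τ hinv h1 h2 h3
    have : τ = 1 := Equiv.ext fun x => by
      by_contra hx
      rcases h3 x hx with h | h <;> simp at h
    simp [this]
  | @insert a A ha ih =>
    intro τ hinv h1 h2 h3
    have hba : τ a ≠ a := h2 a (Finset.mem_insert_self a A)
    have hbA : τ a ∉ insert a A := h1 a (Finset.mem_insert_self a A)
    set τ' : Equiv.Perm α := Equiv.swap a (τ a) * τ with hτ'
    have hτa : τ' a = a := by simp [hτ', Equiv.swap_apply_right]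
    have hτb : τ' (τ a) = τ a := by simp [hτ', hinv a, Equiv.swap_apply_left]
    have key : ∀ x, x ≠ a → x ≠ τ a → τ' x = τ x := by
      intro x hxa hxb
      have h1' : τ x ≠ a := fun h => hxb (by rw [← hinv x, h])
      have h2' : τ x ≠ τ a := fun h => hxa (τ.injective h)
      simp [hτ', Equiv.swap_apply_of_ne_of_ne h1' h2']
    have hinv' : Function.Involutive τ' := by
      intro x
      by_cases hxa : x = a
      · rw [hxa, hτa, hτa]
      by_cases hxb : x = τ a
      · rw [hxb, hτb, hτb]
      · have h1' : τ x ≠ a := fun h => hxb (by rw [← hinv x, h])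
        have h2' : τ x ≠ τ a := fun h => hxa (τ.injective h)
        rw [key x hxa hxb, key (τ x) h1' h2', hinv x]
    have h1' : ∀ c ∈ A, τ' c ∉ A := by
      intro c hc
      have hca : c ≠ a := fun h => ha (h ▸ hc)
      have hcb : c ≠ τ a := fun h => hbA (h ▸ Finset.mem_insert_of_mem hc)
      rw [key c hca hcb]
      intro hmem
      exact h1 c (Finset.mem_insert_of_mem hc) (Finset.mem_insert_of_mem hmem)
    have h2' : ∀ c ∈ A, τ' c ≠ c := by
      intro c hc
      have hca : c ≠ a := fun h => ha (h ▸ hc)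
      have hcb : c ≠ τ a := fun h => hbA (h ▸ Finset.mem_insert_of_mem hc)
      rw [key c hca hcb]
      exact h2 c (Finset.mem_insert_of_mem hc)
    have h3' : ∀ x, τ' x ≠ x → x ∈ A ∨ τ' x ∈ A := by
      intro x hx
      have hxa : x ≠ a := fun h => hx (h ▸ hτa)
      have hxb : x ≠ τ a := fun h => hx (h ▸ hτb)
      rw [key x hxa hxb] at hx ⊢
      have h1'' : τ x ≠ a := fun h => hxb (by rw [← hinv x, h])
      rcases h3 x hx with h | h
      · exact Or.inl ((Finset.mem_insert.1 h).resolve_left hxa)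
      · exact Or.inr ((Finset.mem_insert.1 h).resolve_left h1'')
    have hsplit : Equiv.swap a (τ a) * τ' = τ := by
      rw [hτ', ← mul_assoc, Equiv.swap_mul_self, one_mul]
    calc Equiv.Perm.sign τ = Equiv.Perm.sign (Equiv.swap a (τ a) * τ') := by rw [hsplit]
      _ = (-1) * (-1) ^ A.card := by
          rw [map_mul, Equiv.Perm.sign_swap (Ne.symm hba), ih τ' hinv' h1' h2' h3']
      _ = (-1) ^ (insert a A).card := by
          rw [Finset.card_insert_of_notMem ha, pow_succ, mul_comm]
/-- **Lemma.**  Let `S = ν \ μ` be a symmetric skew shape with an odd number of boxes strictly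
above the main diagonal.  Then the sign-imbalance of `S` vanishes: for any fixed standard
tableau `T₀` of shape `S`, the signs of the permutations `T ∘ T₀⁻¹`, summed over all standard
tableaux `T` of shape `S`, add up to `0`. -/
theorem sign_imbalance_eq_zero_of_symmetric_odd (μ ν : YoungDiagram) (hμν : μ ≤ ν)
    (S : Finset (ℕ × ℕ)) (hS : S = ν.cells \ μ.cells)
    (hsym : ∀ i j : ℕ, (i, j) ∈ S ↔ (j, i) ∈ S)
    (hodd : Odd (S.filter fun c => c.1 < c.2).card)
    (T₀ : {x // x ∈ S} ≃ Fin S.card) (hT₀ : IsStdTableau S T₀) :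
    ∑ T ∈ Finset.univ.filter (fun T : {x // x ∈ S} ≃ Fin S.card => IsStdTableau S T),
      ((Equiv.Perm.sign (T₀.symm.trans T) : ℤˣ) : ℤ) = 0 := by
  classical
  -- the transpose involution on the cells of `S`
  have hmem : ∀ a : {x // x ∈ S}, (a.1.2, a.1.1) ∈ S := fun a =>
    (hsym a.1.1 a.1.2).1 (by simpa using a.2)
  set t : {x // x ∈ S} → {x // x ∈ S} := fun a => ⟨(a.1.2, a.1.1), hmem a⟩ with ht
  have htinv : Function.Involutive t := fun a => Subtype.ext (by simp [ht])
  set τc : Equiv.Perm {x // x ∈ S} := htinv.toPerm with hτc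
  have hτc_apply : ∀ a, τc a = t a := fun a => rfl
  -- the set of boxes strictly above the diagonal
  set A : Finset {x // x ∈ S} :=
    Finset.univ.filter (fun a : {x // x ∈ S} => a.1.1 < a.1.2) with hA
  have hcardA : A.card = (S.filter fun c => c.1 < c.2).card := by
    apply Finset.card_bij (fun a _ => a.1)
    · intro a haA
      simp only [hA, Finset.mem_filter, Finset.mem_univ, true_and] at haA
      exact Finset.mem_filter.2 ⟨a.2, haA⟩
    · intro a _ b _ h; exact Subtype.ext h
    · intro c hc
      rw [Finset.mem_filter] at hc
      exact ⟨⟨c, hc.1⟩, by simp [hA, hc.2], rfl⟩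
  have hsignτ : Equiv.Perm.sign τc = -1 := by
    rw [sign_involutive_eq A τc (fun a => htinv a)]
    · rw [hcardA, (hodd).neg_one_pow]
    · intro a haA
      simp only [hA, Finset.mem_filter, Finset.mem_univ, true_and,
        hτc_apply, ht] at haA ⊢
      omega
    · intro a haA
      simp only [hA, Finset.mem_filter, Finset.mem_univ, true_and] at haA
      intro h
      have := congrArg (fun z => (Subtype.val z).1) h
      simp [hτc_apply, ht] at this
      omega
    · intro x hx
      have hne : x.1.1 ≠ x.1.2 := by
        intro h
        apply hx
        apply Subtype.ext
        simp [hτc_apply, ht, Prod.ext_iff, h]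
      simp only [hA, Finset.mem_filter, Finset.mem_univ, true_and, hτc_apply, ht]
      omega
  -- transposing preserves standardness
  have hstd : ∀ T : {x // x ∈ S} ≃ Fin S.card, IsStdTableau S T →
      IsStdTableau S ((τc : {x // x ∈ S} ≃ {x // x ∈ S}).trans T) := by
    intro T hT a b hne h₁ h₂
    simp only [Equiv.trans_apply]
    exact hT (τc a) (τc b) (fun h => hne (τc.injective h)) h₂ h₁
  -- the sign flips under transposition
  have hsign : ∀ T : {x // x ∈ S} ≃ Fin S.card,
      Equiv.Perm.sign (T₀.symm.trans ((τc : {x // x ∈ S} ≃ {x // x ∈ S}).trans T)) =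
        -(Equiv.Perm.sign (T₀.symm.trans T)) := by
    intro T
    have heq : T₀.symm.trans ((τc : {x // x ∈ S} ≃ {x // x ∈ S}).trans T) =
        (T₀.symm.trans T) * (T₀.permCongr τc) := by
      ext x
      simp [Equiv.Perm.mul_apply, Equiv.permCongr_apply]
    rw [heq, map_mul, Equiv.Perm.sign_permCongr, hsignτ]
    exact mul_neg_one _
  -- `S` has a strictly-above-diagonal box, so the transposition is not the identity
  obtain ⟨c, hc⟩ := Finset.card_pos.1 hodd.pos
  apply Finset.sum_involution
    (fun T _ => (τc : {x // x ∈ S} ≃ {x // x ∈ S}).trans T)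
  · intro T hT
    rw [hsign T]
    push_cast
    ring
  · intro T _ _ h
    rw [Finset.mem_filter] at hc
    have h1 : τc ⟨c, hc.1⟩ = ⟨c, hc.1⟩ := T.injective (by
      have := congrArg (fun e : {x // x ∈ S} ≃ Fin S.card => e ⟨c, hc.1⟩) h
      simpa using this)
    have h2 := congrArg (fun z => (Subtype.val z).1) h1
    simp [hτc_apply, ht] at h2
    omega
  · intro T hTmem
    rw [Finset.mem_filter] at hTmem ⊢
    exact ⟨Finset.mem_univ _, hstd T hTmem.2⟩
  · intro T _
    ext x
    simp only [Equiv.trans_apply, hτc_apply, htinv x]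
end

section
/- Let μ ⊆ ν be Young diagrams and let S = ν \ μ be the set of cells of the skew shape. If S is symmetric, i.e., (i,j) ∈ S if and only if (j,i) ∈ S, and |S| > 1, then the number of standard tableaux of shape S is even. -/
open scoped Classical

lemma even_card_of_invol {α : Type*} [DecidableEq α] (s : Finset α) (f : α → α)
    (h1 : ∀ a ∈ s, f a ∈ s) (h2 : ∀ a ∈ s, f (f a) = a) (h3 : ∀ a ∈ s, f a ≠ a) :
    Even s.card := by
  induction s using Finset.strongInduction with
  | _ s ih =>
    rcases s.eq_empty_or_nonempty with rfl | ⟨a, ha⟩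
    · simp
    · set t := s \ {a, f a} with ht
      have hsub : t ⊂ s := by
        refine Finset.ssubset_iff_of_subset (Finset.sdiff_subset) |>.mpr ⟨a, ha, by simp [ht]⟩
      have hmem : ∀ b ∈ t, b ∈ s ∧ b ≠ a ∧ b ≠ f a := by
        intro b hb
        simp only [ht, Finset.mem_sdiff, Finset.mem_insert, Finset.mem_singleton] at hb
        tauto
      have hfa : f a ∈ s := h1 a ha
      have hcard : s.card = t.card + 2 := by
        have : ({a, f a} : Finset α) ⊆ s := by
          intro x hx; simp only [Finset.mem_insert, Finset.mem_singleton] at hx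
          rcases hx with rfl | rfl <;> assumption
        have h2c : ({a, f a} : Finset α).card = 2 := by
          rw [Finset.card_insert_of_notMem (by simp [Ne.symm (h3 a ha)]), Finset.card_singleton]
        have hle := Finset.card_le_card this
        rw [ht, Finset.card_sdiff_of_subset this, h2c]
        omega
      have ht' : Even t.card := by
        refine ih t hsub (fun b hb => ?_) (fun b hb => h2 b (hmem b hb).1)
          (fun b hb => h3 b (hmem b hb).1)
        obtain ⟨hbs, hba, hbf⟩ := hmem b hb
        have hfb : f b ∈ s := h1 b hbs
        simp only [ht, Finset.mem_sdiff, Finset.mem_insert, Finset.mem_singleton]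
        refine ⟨hfb, fun h => ?_⟩
        rcases h with h | h
        · apply hbf; rw [← h, h2 b hbs]
        · apply hba
          have := congrArg f h
          rwa [h2 b hbs, h2 a ha] at this
      rw [hcard]
      exact ht'.add even_two

/-- **Lemma.**  A symmetric skew shape `S = ν \ μ` with more than one box has an even number
of standard tableaux. -/
theorem card_std_tableaux_even_of_symmetric (μ ν : YoungDiagram) (hμν : μ ≤ ν)
    (S : Finset (ℕ × ℕ)) (hS : S = ν.cells \ μ.cells)
    (hsym : ∀ i j : ℕ, (i, j) ∈ S ↔ (j, i) ∈ S)
    (hcard : 1 < S.card) :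
    Even (Finset.univ.filter
      (fun T : {x // x ∈ S} ≃ Fin S.card => IsStdTableau S T)).card := by
  -- transpose equivalence on cells
  have hsym' : ∀ x : ℕ × ℕ, x ∈ S → (x.2, x.1) ∈ S := fun x hx => (hsym x.1 x.2).mp (by simpa using hx)
  let e : {x // x ∈ S} ≃ {x // x ∈ S} :=
    { toFun := fun a => ⟨(a.1.2, a.1.1), hsym' a.1 a.2⟩
      invFun := fun a => ⟨(a.1.2, a.1.1), hsym' a.1 a.2⟩
      left_inv := fun a => by ext <;> simp
      right_inv := fun a => by ext <;> simp }
  -- there is an off-diagonal cell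
  obtain ⟨c, hc, hcd⟩ : ∃ c ∈ S, c.1 ≠ c.2 := by
    by_contra h
    push_neg at h
    obtain ⟨a, ha, b, hb, hab⟩ := Finset.one_lt_card.mp hcard
    have ha2 := h a ha
    have hb2 := h b hb
    obtain ⟨i, j⟩ := a; obtain ⟨k, l⟩ := b
    simp only at ha2 hb2; subst ha2; subst hb2
    have hik : i ≠ k := by simpa using hab
    -- wlog i < k
    rcases lt_or_gt_of_ne hik with hlt | hlt
    · have hν : (i, k) ∈ ν.cells := by
        have hkk : (k, k) ∈ ν.cells := by
          rw [hS] at hb; exact (Finset.mem_sdiff.mp hb).1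
        exact ν.isLowerSet (Prod.mk_le_mk.mpr ⟨le_of_lt hlt, le_refl k⟩) hkk
      have hμ' : (i, k) ∉ μ.cells := by
        intro hm
        have : (i, i) ∈ μ.cells := μ.isLowerSet (Prod.mk_le_mk.mpr ⟨le_refl i, le_of_lt hlt⟩) hm
        rw [hS] at ha; exact (Finset.mem_sdiff.mp ha).2 this
      have : (i, k) ∈ S := by rw [hS]; exact Finset.mem_sdiff.mpr ⟨hν, hμ'⟩
      exact hlt.ne (h _ this)
    · have hν : (k, i) ∈ ν.cells := by
        have hii : (i, i) ∈ ν.cells := by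
          rw [hS] at ha; exact (Finset.mem_sdiff.mp ha).1
        exact ν.isLowerSet (Prod.mk_le_mk.mpr ⟨le_of_lt hlt, le_refl i⟩) hii
      have hμ' : (k, i) ∉ μ.cells := by
        intro hm
        have : (k, k) ∈ μ.cells := μ.isLowerSet (Prod.mk_le_mk.mpr ⟨le_refl k, le_of_lt hlt⟩) hm
        rw [hS] at hb; exact (Finset.mem_sdiff.mp hb).2 this
      have : (k, i) ∈ S := by rw [hS]; exact Finset.mem_sdiff.mpr ⟨hν, hμ'⟩
      exact hlt.ne (h _ this)
  apply even_card_of_invol _ (fun T => e.trans T)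
  · -- maps standard to standard
    intro T hT
    simp only [Finset.mem_filter, Finset.mem_univ, true_and] at hT ⊢
    intro a b hab h1 h2
    exact hT (e a) (e b) (fun h => hab (e.injective h)) h2 h1
  · intro T _
    ext a
    simp [e]
  · intro T _ hfix
    have : T (e ⟨c, hc⟩) = T ⟨c, hc⟩ := by
      conv_rhs => rw [← hfix]
      rfl
    have := T.injective this
    apply hcd
    have : (c.2, c.1) = c := congrArg Subtype.val this
    exact (congrArg Prod.fst this).symm
end
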